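/- arXiv:1312.0065 — 2 statements merged into one kernel-verified Lean document; each statement's English description precedes it below -/
import Mathlib

section
/- Lovász's spectral formula: for a random walk on a connected graph G, H(x,y) = vol(G) · Σ_{k=2}^{n} (1/λ_k) · (v_{ky}^2/d_y - v_{kx} v_{ky}/√(d_x d_y)), where 0 = λ_1 < λ_2 ≤ … ≤ λ_n are the eigenvalues of the normalized Laplacian L = D^{-1/2}(D-A)D^{-1/2} with orthonormal eigenvectors v_1,…,v_n. -/
open Matrix

/-- `H` is the vector of expected hitting times of the simple random walk on `G`. -/
def IsHittingTime {V : Type*} [Fintype V] (G : SimpleGraph V) [DecidableRel G.Adj]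
    (H : V → V → ℝ) : Prop :=
  (∀ y, H y y = 0) ∧
  ∀ x y, x ≠ y → H x y = 1 + (∑ z ∈ G.neighborFinset x, H z y) / (G.degree x)

/-- Chung's normalized Laplacian `𝓛 = D^{-1/2} (D - A) D^{-1/2}`. -/
noncomputable def normalizedLaplacian {V : Type*} [Fintype V] [DecidableEq V]
    (G : SimpleGraph V) [DecidableRel G.Adj] : Matrix V V ℝ :=
  fun u w => (G.lapMatrix ℝ) u w / (Real.sqrt (G.degree u) * Real.sqrt (G.degree w))

/-!
Write `L = D - A` for the combinatorial Laplacian. Both `u ↦ H(u, y)` and the spectral expression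
`u ↦ f(u)` vanish at `y` and satisfy `(L f)(u) = d_u` for `u ≠ y`. The column sums of `L` vanish,
so their difference is harmonic at `y` too, hence constant on the connected graph, hence zero.

On the spectral side, `ψ_k = D^{-1/2} v_k` satisfies `L ψ_k = λ_k D^{1/2} v_k`. The kernel of `L`
consists of the constants, so `v_1 = ± D^{1/2} 𝟙 / √vol`, and completeness of the orthonormal basis
gives `∑_{k ≥ 2} v_k(u) v_k(y) = -√(d_u d_y) / vol` for `u ≠ y`; this yields `(L f)(u) = d_u`.
-/

theorem Matrix.sum_mul_eq_ite_of_orthonormal {ι V R : Type*} [Fintype ι] [Fintype V]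
    [DecidableEq ι] [DecidableEq V] [CommRing R] (hcard : Fintype.card ι = Fintype.card V)
    (v : ι → V → R) (horth : ∀ k l, ∑ i, v k i * v l i = if k = l then 1 else 0) (a b : V) :
    ∑ k, v k a * v k b = if a = b then 1 else 0 := by
  have hrows : (Matrix.of v) * (Matrix.of v)ᵀ = 1 := by
    ext k l
    simpa [Matrix.mul_apply, Matrix.one_apply] using horth k l
  simpa [Matrix.mul_apply, Matrix.one_apply] using
    congrFun (congrFun ((mul_eq_one_comm_of_card_eq ι V R hcard).mp hrows) a) b

namespace SimpleGraph

variable {V : Type*} [Fintype V] (G : SimpleGraph V) [DecidableRel G.Adj]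

variable {ι : Type*} [Fintype ι] [DecidableEq ι]

/-- The right-hand side of Lovász's formula for an eigenbasis `v` of the normalized Laplacian
indexed by `ι`, where `k₀` indexes the eigenvalue `0`. -/
noncomputable def spectralHittingTime (lam : ι → ℝ) (v : ι → V → ℝ) (k₀ : ι) (x y : V) : ℝ :=
  (∑ w : V, (G.degree w : ℝ)) *
    ∑ k ∈ Finset.univ \ {k₀}, (1 / lam k) *
      ((v k y) ^ 2 / (G.degree y : ℝ) -
        (v k x) * (v k y) / Real.sqrt ((G.degree x : ℝ) * (G.degree y : ℝ)))

theorem spectralHittingTime_self (lam : ι → ℝ) (v : ι → V → ℝ) (k₀ : ι) (y : V) :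
    G.spectralHittingTime lam v k₀ y y = 0 := by
  refine mul_eq_zero_of_right _ (Finset.sum_eq_zero fun k _ => ?_)
  rw [Real.sqrt_mul_self (Nat.cast_nonneg _), sq, sub_self, mul_zero]

variable [DecidableEq V]

theorem sum_lapMatrix_mulVec {R : Type*} [CommRing R] (g : V → R) :
    ∑ u, (G.lapMatrix R *ᵥ g) u = 0 := by
  rw [← one_dotProduct, dotProduct_mulVec, ← mulVec_transpose, (isSymm_lapMatrix R G).eq]
  exact (congrArg (· ⬝ᵥ g) (G.lapMatrix_mulVec_const_eq_zero)).trans (zero_dotProduct g)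

theorem lapMatrix_mulVec_const {R : Type*} [NonAssocRing R] (c : R) :
    G.lapMatrix R *ᵥ (fun _ => c) = 0 := by
  ext u
  simp [lapMatrix_mulVec_apply]

variable {G}

theorem Connected.eq_of_lapMatrix_mulVec_eq_of_ne (hG : G.Connected) {f g : V → ℝ} {y : V}
    (hfg : ∀ u, u ≠ y → (G.lapMatrix ℝ *ᵥ f) u = (G.lapMatrix ℝ *ᵥ g) u) (hy : f y = g y) :
    f = g := by
  have hoff : ∀ u, u ≠ y → (G.lapMatrix ℝ *ᵥ (f - g)) u = 0 := fun u hu => by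
    rw [mulVec_sub, Pi.sub_apply, hfg u hu, sub_self]
  have hharm : G.lapMatrix ℝ *ᵥ (f - g) = 0 := by
    ext u
    obtain rfl | hu := eq_or_ne u y
    · have hsum := G.sum_lapMatrix_mulVec (f - g)
      rwa [← Finset.sum_erase_add _ _ (Finset.mem_univ u),
        Finset.sum_eq_zero fun w hw => hoff w (Finset.ne_of_mem_erase hw), zero_add] at hsum
    · exact hoff u hu
  funext a
  have := G.lapMatrix_mulVec_eq_zero_iff_forall_reachable.mp hharm a y (hG.preconnected a y)
  rw [Pi.sub_apply, Pi.sub_apply, hy, sub_self] at this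
  exact sub_eq_zero.mp this

theorem _root_.IsHittingTime.lapMatrix_mulVec_apply_of_ne {H : V → V → ℝ} (hH : IsHittingTime G H)
    {u y : V} (hu : u ≠ y) : (G.lapMatrix ℝ *ᵥ fun w => H w y) u = G.degree u := by
  rw [SimpleGraph.lapMatrix_mulVec_apply, hH.2 u y hu]
  obtain hdeg | hdeg := eq_or_ne (G.degree u) 0
  · have : G.neighborFinset u = ∅ := by
      rw [← Finset.card_eq_zero, card_neighborFinset_eq_degree, hdeg]
    simp [hdeg, this]
  · have : (G.degree u : ℝ) ≠ 0 := Nat.cast_ne_zero.mpr hdeg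
    field_simp
    ring

variable (G) in
theorem normalizedLaplacian_mulVec_apply (φ : V → ℝ) (u : V) :
    (normalizedLaplacian G *ᵥ φ) u =
      (G.lapMatrix ℝ *ᵥ fun w => φ w / √(G.degree w)) u / √(G.degree u) := by
  simp only [mulVec, dotProduct, normalizedLaplacian, Finset.sum_div]
  refine Finset.sum_congr rfl fun w _ => ?_
  rw [mul_comm √_ √_, ← div_div]
  ring

theorem lapMatrix_mulVec_div_sqrt_degree_of_mulVec_eq_smul {φ : V → ℝ} {μ : ℝ}
    (h : normalizedLaplacian G *ᵥ φ = μ • φ) {u : V} (hu : 0 < G.degree u) :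
    (G.lapMatrix ℝ *ᵥ fun w => φ w / √(G.degree w)) u = μ * √(G.degree u) * φ u := by
  have hsqrt : √(G.degree u : ℝ) ≠ 0 := by positivity
  have := congrFun h u
  rw [normalizedLaplacian_mulVec_apply, Pi.smul_apply, smul_eq_mul, div_eq_iff hsqrt] at this
  rw [this]
  ring

theorem Connected.mul_eq_of_normalizedLaplacian_mulVec_eq_zero (hG : G.Connected)
    (hdeg : ∀ w, 0 < G.degree w) {φ : V → ℝ} (h : normalizedLaplacian G *ᵥ φ = 0)
    (hφ : ∑ i, φ i * φ i = 1) (a b : V) :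
    φ a * φ b = √(G.degree a) * √(G.degree b) / ∑ w, (G.degree w : ℝ) := by
  set ψ : V → ℝ := fun w => φ w / √(G.degree w)
  have hψ : G.lapMatrix ℝ *ᵥ ψ = 0 := by
    ext u
    rw [lapMatrix_mulVec_div_sqrt_degree_of_mulVec_eq_smul (by rw [h, zero_smul]) (hdeg u)]
    simp
  have hφ_eq : ∀ w, φ w = ψ b * √(G.degree w) := fun w => by
    rw [← G.lapMatrix_mulVec_eq_zero_iff_forall_reachable.mp hψ w b (hG.preconnected w b)]
    have : √(G.degree w : ℝ) ≠ 0 := by have := hdeg w; positivity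
    exact (div_mul_cancel₀ _ this).symm
  have hvol : ψ b * ψ b * ∑ w, (G.degree w : ℝ) = 1 := by
    rw [← hφ, Finset.mul_sum]
    refine Finset.sum_congr rfl fun w _ => ?_
    rw [hφ_eq w, mul_mul_mul_comm, Real.mul_self_sqrt (Nat.cast_nonneg _)]
  have hvol_ne : ∑ w, (G.degree w : ℝ) ≠ 0 := by
    intro h0; simp [h0] at hvol
  rw [hφ_eq a, hφ_eq b, eq_div_iff hvol_ne]
  linear_combination (√(G.degree a) * √(G.degree b)) * hvol

theorem Connected.lapMatrix_mulVec_spectralHittingTime (hG : G.Connected)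
    (hdeg : ∀ w, 0 < G.degree w) (hcard : Fintype.card ι = Fintype.card V)
    {lam : ι → ℝ} {v : ι → V → ℝ} {k₀ : ι}
    (heig : ∀ k, normalizedLaplacian G *ᵥ v k = lam k • v k)
    (horth : ∀ k l, ∑ i, v k i * v l i = if k = l then 1 else 0)
    (h₀ : lam k₀ = 0) (hlam : ∀ k, k ≠ k₀ → lam k ≠ 0) {u y : V} (hu : u ≠ y) :
    (G.lapMatrix ℝ *ᵥ fun x => G.spectralHittingTime lam v k₀ x y) u = G.degree u := by
  set d : V → ℝ := fun w => G.degree w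
  set vol := ∑ w, d w
  set S := Finset.univ \ {k₀}
  set ψ : ι → V → ℝ := fun k w => v k w / √(d w)
  have hproj : ∑ k ∈ S, v k u * v k y = -(√(d u) * √(d y) / vol) := by
    rw [Finset.sum_sdiff_eq_sub (Finset.subset_univ _), Finset.sum_singleton,
      Matrix.sum_mul_eq_ite_of_orthonormal hcard v horth, if_neg hu, zero_sub,
      hG.mul_eq_of_normalizedLaplacian_mulVec_eq_zero hdeg (by rw [heig, h₀, zero_smul])
        (by simpa using horth k₀ k₀)]
  have hdecomp : (fun x => G.spectralHittingTime lam v k₀ x y) =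
      (fun _ => vol * ∑ k ∈ S, 1 / lam k * (v k y ^ 2 / d y)) -
        ∑ k ∈ S, (vol * v k y / (lam k * √(d y))) • ψ k := by
    ext x
    simp only [spectralHittingTime, Pi.sub_apply, Finset.sum_apply, Pi.smul_apply, smul_eq_mul,
      Real.sqrt_mul (Nat.cast_nonneg _), Finset.mul_sum, ← Finset.sum_sub_distrib]
    refine Finset.sum_congr rfl fun k _ => ?_
    ring
  rw [hdecomp, mulVec_sub, lapMatrix_mulVec_const, zero_sub, mulVec_sum, Pi.neg_apply,
    Finset.sum_apply]
  simp only [mulVec_smul, Pi.smul_apply, smul_eq_mul]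
  have hterm : ∀ k ∈ S, vol * v k y / (lam k * √(d y)) * (G.lapMatrix ℝ *ᵥ ψ k) u
      = vol * √(d u) / √(d y) * (v k u * v k y) := fun k hk => by
    rw [lapMatrix_mulVec_div_sqrt_degree_of_mulVec_eq_smul (heig k) (hdeg u)]
    have := hlam k (by simpa [S] using hk)
    field_simp
    ring
  rw [Finset.sum_congr rfl hterm, ← Finset.mul_sum, hproj]
  have : √(d y) ≠ 0 := by have := hdeg y; positivity
  have : vol ≠ 0 := (Finset.sum_pos (fun w _ => Nat.cast_pos.mpr (hdeg w)) ⟨u, by simp⟩).ne'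
  field_simp
  exact Real.sq_sqrt (Nat.cast_nonneg _)

end SimpleGraph

theorem lovasz_spectral_formula_general {V : Type*} [Fintype V] [DecidableEq V]
    (G : SimpleGraph V) [DecidableRel G.Adj] (hG : G.Connected)
    (H : V → V → ℝ) (hH : IsHittingTime G H)
    (n : ℕ) (hn : Fintype.card V = n) (hn0 : 0 < n)
    (lam : Fin n → ℝ) (v : Fin n → V → ℝ)
    (h0 : lam ⟨0, hn0⟩ = 0)
    (hpos : ∀ k : Fin n, k ≠ ⟨0, hn0⟩ → 0 < lam k)
    (heig : ∀ k : Fin n, (normalizedLaplacian G) *ᵥ (v k) = lam k • (v k))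
    (horth : ∀ k l : Fin n, (∑ i : V, v k i * v l i) = if k = l then (1 : ℝ) else 0)
    (x y : V) :
    H x y = (∑ w : V, (G.degree w : ℝ)) *
      ∑ k ∈ Finset.univ \ {(⟨0, hn0⟩ : Fin n)}, (1 / lam k) *
        ((v k y) ^ 2 / (G.degree y : ℝ) -
          (v k x) * (v k y) / Real.sqrt ((G.degree x : ℝ) * (G.degree y : ℝ))) := by
  change H x y = G.spectralHittingTime lam v ⟨0, hn0⟩ x y
  rcases subsingleton_or_nontrivial V with hV | hV
  · rw [Subsingleton.elim x y, hH.1 y, G.spectralHittingTime_self]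
  have hdeg : ∀ w, 0 < G.degree w := fun w => hG.preconnected.degree_pos_of_nontrivial w
  suffices (fun w => H w y) = fun w => G.spectralHittingTime lam v ⟨0, hn0⟩ w y from
    congrFun this x
  refine hG.eq_of_lapMatrix_mulVec_eq_of_ne (y := y) (fun u hu => ?_) ?_
  · rw [hH.lapMatrix_mulVec_apply_of_ne hu, hG.lapMatrix_mulVec_spectralHittingTime hdeg
      (by simp [hn]) heig horth h0 (fun k hk => (hpos k hk).ne') hu]
  · rw [hH.1 y, G.spectralHittingTime_self]

/-- Lovász's spectral formula for hitting times. -/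
theorem lovasz_spectral_formula {V : Type*} [Fintype V] [DecidableEq V]
    (G : SimpleGraph V) [DecidableRel G.Adj] (hG : G.Connected)
    (H : V → V → ℝ) (hH : IsHittingTime G H)
    (n : ℕ) (hn : Fintype.card V = n) (hn0 : 0 < n)
    (lam : Fin n → ℝ) (v : Fin n → V → ℝ)
    (hmono : Monotone lam) (h0 : lam ⟨0, hn0⟩ = 0)
    (hpos : ∀ k : Fin n, k ≠ ⟨0, hn0⟩ → 0 < lam k)
    (heig : ∀ k : Fin n, (normalizedLaplacian G) *ᵥ (v k) = lam k • (v k))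
    (horth : ∀ k l : Fin n, (∑ i : V, v k i * v l i) = if k = l then (1 : ℝ) else 0)
    (x y : V) :
    H x y = (∑ w : V, (G.degree w : ℝ)) *
      ∑ k ∈ Finset.univ \ {(⟨0, hn0⟩ : Fin n)}, (1 / lam k) *
        ((v k y) ^ 2 / (G.degree y : ℝ) -
          (v k x) * (v k y) / Real.sqrt ((G.degree x : ℝ) * (G.degree y : ℝ))) :=
  lovasz_spectral_formula_general G hG H hH n hn hn0 lam v h0 hpos heig horth x y
end

section
/- A connected graph G is reversible (H(x,y) = H(y,x) for all x, y) if and only if the quantity Σ_{u ∈ V(G)} d_u R_{vu} is independent of the vertex v, where R_{vu} is the effective resistance between v and u. -/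
open Matrix Finset

/-!
Writing `h_y = H(·, y)`, the hitting-time equations say `L h_y = ∑_u d_u (e_u - e_y)`.
Pairing this with a potential `φ` of the unit current from `x` to `y` and using the symmetry
of the Laplacian (reciprocity) gives `H(x, y) = ∑_u d_u (φ u - φ y)`. Reciprocity also gives
`2 (φ u - φ y) = R_{xy} + R_{uy} - R_{ux}`, hence Tetali's formula
`2 H(x, y) = ∑_u d_u (R_{xy} + R_{uy} - R_{ux})`, and so
`H(x, y) - H(y, x) = ∑_u d_u R_{yu} - ∑_u d_u R_{xu}`.
-/

section UnitCurrent

variable {V : Type*} [Fintype V] [DecidableEq V]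

def unitCurrent (v u : V) : V → ℝ :=
  fun z => (if z = v then 1 else 0) - (if z = u then 1 else 0)

@[simp]
lemma unitCurrent_dotProduct (v u : V) (f : V → ℝ) : unitCurrent v u ⬝ᵥ f = f v - f u := by
  simp [unitCurrent, dotProduct, sub_mul, ite_mul, sum_sub_distrib]

lemma sum_unitCurrent (v u : V) : ∑ z, unitCurrent v u z = 0 := by
  simp [unitCurrent, sum_sub_distrib]

lemma eq_of_sum_eq_of_forall_ne {M : Type*} [AddCommGroup M] {f g : V → M} (y : V) (hsum : ∑ x, f x = ∑ x, g x)
    (hne : ∀ x, x ≠ y → f x = g x) : f = g := by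
  have hrest : ∑ x ∈ univ.erase y, f x = ∑ x ∈ univ.erase y, g x :=
    sum_congr rfl fun x hx => hne x (ne_of_mem_erase hx)
  funext x
  by_cases hxy : x = y
  · subst hxy
    rw [← add_sum_erase _ _ (mem_univ x), ← add_sum_erase _ _ (mem_univ x), hrest] at hsum
    exact add_right_cancel hsum
  · exact hne x hxy

end UnitCurrent

namespace SimpleGraph

variable {V : Type*} [Fintype V] [DecidableEq V] (G : SimpleGraph V) [DecidableRel G.Adj]

/-- Reciprocity. -/
lemma lapMatrix_mulVec_dotProduct_comm (φ ψ : V → ℝ) :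
    (G.lapMatrix ℝ *ᵥ φ) ⬝ᵥ ψ = (G.lapMatrix ℝ *ᵥ ψ) ⬝ᵥ φ := by
  have hsymm : (G.lapMatrix ℝ)ᵀ = G.lapMatrix ℝ := (G.isSymm_lapMatrix (R := ℝ)).eq
  rw [dotProduct_comm, dotProduct_mulVec, ← hsymm, vecMul_transpose, hsymm]

lemma sum_lapMatrix_mulVec_s14 (f : V → ℝ) : ∑ x, (G.lapMatrix ℝ *ᵥ f) x = 0 := by
  have h := G.lapMatrix_mulVec_dotProduct_comm f (fun _ => 1)
  rw [G.lapMatrix_mulVec_const_eq_zero, zero_dotProduct] at h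
  simpa [dotProduct] using h

variable {G}

lemma Connected.sub_eq_sub_of_lapMatrix_mulVec_eq (hG : G.Connected) {φ ψ : V → ℝ}
    (h : G.lapMatrix ℝ *ᵥ φ = G.lapMatrix ℝ *ᵥ ψ) (x y : V) : φ x - φ y = ψ x - ψ y := by
  have hker : G.lapMatrix ℝ *ᵥ (φ - ψ) = 0 := by rw [mulVec_sub, h, sub_self]
  have := G.lapMatrix_mulVec_eq_zero_iff_forall_reachable.mp hker x y (hG.preconnected x y)
  simp only [Pi.sub_apply] at this
  linarith

end SimpleGraph

section Electrical

open SimpleGraph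

variable {V : Type*} [Fintype V] [DecidableEq V] {G : SimpleGraph V} [DecidableRel G.Adj]

lemma IsHittingTime.lapMatrix_mulVec {H : V → V → ℝ} (hG : G.Connected) (hH : IsHittingTime G H)
    (y : V) :
    G.lapMatrix ℝ *ᵥ (fun x => H x y) = ∑ u, (G.degree u : ℝ) • unitCurrent u y := by
  refine eq_of_sum_eq_of_forall_ne y ?_ fun x hxy => ?_
  · simp only [sum_lapMatrix_mulVec_s14, Finset.sum_apply, Pi.smul_apply, smul_eq_mul]
    rw [sum_comm]
    simp [← mul_sum, sum_unitCurrent]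
  · have hd : (0 : ℝ) < G.degree x := mod_cast (hG.preconnected x y).degree_pos_left hxy
    simp only [lapMatrix_mulVec_apply, hH.2 x y hxy, Finset.sum_apply, Pi.smul_apply, smul_eq_mul,
      unitCurrent, mul_ite, mul_one, mul_zero, sum_ite_eq, mem_univ, if_true, if_neg hxy,
      sub_zero]
    field_simp
    ring

lemma IsHittingTime.eq_sum_degree_mul {H : V → V → ℝ} (hG : G.Connected)
    (hH : IsHittingTime G H) {x y : V} {φ : V → ℝ} (hφ : G.lapMatrix ℝ *ᵥ φ = unitCurrent x y) :
    H x y = ∑ u, (G.degree u : ℝ) * (φ u - φ y) := by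
  have h := G.lapMatrix_mulVec_dotProduct_comm (fun x => H x y) φ
  rw [hH.lapMatrix_mulVec hG y, hφ, unitCurrent_dotProduct, hH.1 y, sub_zero] at h
  simpa [sum_dotProduct] using h.symm

def IsEffectiveResistance (G : SimpleGraph V) [DecidableRel G.Adj] (R : V → V → ℝ) : Prop :=
  ∀ v u, ∃ φ : V → ℝ, G.lapMatrix ℝ *ᵥ φ = unitCurrent v u ∧ R v u = φ v - φ u

namespace IsEffectiveResistance

variable {R : V → V → ℝ}

lemma eq_sub_of_lapMatrix_mulVec (hG : G.Connected) (hR : IsEffectiveResistance G R)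
    {v u : V} {φ : V → ℝ} (hφ : G.lapMatrix ℝ *ᵥ φ = unitCurrent v u) : R v u = φ v - φ u := by
  obtain ⟨ψ, hψ, hRψ⟩ := hR v u
  rw [hRψ, hG.sub_eq_sub_of_lapMatrix_mulVec_eq (hψ.trans hφ.symm)]

lemma symm (hG : G.Connected) (hR : IsEffectiveResistance G R) (v u : V) : R v u = R u v := by
  obtain ⟨φ, hφ, hRφ⟩ := hR v u
  have hneg : G.lapMatrix ℝ *ᵥ (-φ) = unitCurrent u v := by
    rw [mulVec_neg, hφ]
    funext z
    simp only [unitCurrent, Pi.neg_apply]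
    ring
  rw [hRφ, hR.eq_sub_of_lapMatrix_mulVec hG hneg, Pi.neg_apply, Pi.neg_apply]
  ring

lemma two_mul_sub_eq (hG : G.Connected) (hR : IsEffectiveResistance G R) {x y : V}
    {φ : V → ℝ} (hφ : G.lapMatrix ℝ *ᵥ φ = unitCurrent x y) (u : V) :
    2 * (φ u - φ y) = R x y + R u y - R u x := by
  obtain ⟨ψ, hψ, hRψ⟩ := hR u y
  have hdiff : G.lapMatrix ℝ *ᵥ (ψ - φ) = unitCurrent u x := by
    rw [mulVec_sub, hψ, hφ]
    funext z
    simp only [unitCurrent, Pi.sub_apply]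
    ring
  have hrecip := G.lapMatrix_mulVec_dotProduct_comm ψ φ
  rw [hψ, hφ, unitCurrent_dotProduct, unitCurrent_dotProduct] at hrecip
  rw [hR.eq_sub_of_lapMatrix_mulVec hG hφ, hR.eq_sub_of_lapMatrix_mulVec hG hdiff, hRψ]
  simp only [Pi.sub_apply]
  linarith

end IsEffectiveResistance

/-- Tetali's formula. -/
lemma IsHittingTime.two_mul_eq_sum {H R : V → V → ℝ} (hG : G.Connected)
    (hH : IsHittingTime G H) (hR : IsEffectiveResistance G R) (x y : V) :
    2 * H x y = ∑ u, (G.degree u : ℝ) * (R x y + R u y - R u x) := by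
  obtain ⟨φ, hφ, -⟩ := hR x y
  rw [hH.eq_sum_degree_mul hG hφ, mul_sum]
  refine sum_congr rfl fun u _ => ?_
  rw [← hR.two_mul_sub_eq hG hφ u]
  ring

lemma IsHittingTime.sub_swap_eq {H R : V → V → ℝ} (hG : G.Connected)
    (hH : IsHittingTime G H) (hR : IsEffectiveResistance G R) (x y : V) :
    H x y - H y x = ∑ u, (G.degree u : ℝ) * R y u - ∑ u, (G.degree u : ℝ) * R x u := by
  have hxy := hH.two_mul_eq_sum hG hR x y
  have hyx := hH.two_mul_eq_sum hG hR y x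
  have hdiff : 2 * (H x y - H y x)
      = 2 * (∑ u, (G.degree u : ℝ) * R y u - ∑ u, (G.degree u : ℝ) * R x u) := by
    rw [mul_sub, hxy, hyx, ← sum_sub_distrib, mul_sub, mul_sum, mul_sum, ← sum_sub_distrib]
    refine sum_congr rfl fun u _ => ?_
    rw [hR.symm hG y x, hR.symm hG u x, hR.symm hG u y]
    ring
  linarith

end Electrical

/-- $G$ is reversible iff $\sum_u d_u R_{vu}$ is independent of $v$, where
$R_{vu}$ is the effective resistance. -/
theorem reversible_iff_resistance_sum_const {V : Type*} [Fintype V] [DecidableEq V]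
    (G : SimpleGraph V) [DecidableRel G.Adj] (hG : G.Connected)
    (H : V → V → ℝ) (hH : IsHittingTime G H)
    (R : V → V → ℝ)
    (hR : ∀ v u : V, ∃ φ : V → ℝ,
      ((G.lapMatrix ℝ) *ᵥ φ =
        fun z => (if z = v then (1 : ℝ) else 0) - (if z = u then (1 : ℝ) else 0)) ∧
      R v u = φ v - φ u) :
    (∀ x y : V, H x y = H y x) ↔
      ∀ v w : V, (∑ u : V, (G.degree u : ℝ) * R v u) = ∑ u : V, (G.degree u : ℝ) * R w u := by
  have hdiff := hH.sub_swap_eq hG (R := R) hR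
  constructor
  · intro hsym v w
    linarith [hdiff w v, hsym w v]
  · intro hconst x y
    linarith [hdiff x y, hconst x y]
end
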